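/- Let ψ₁, ψ₂ : ℂ² × ℂ⁴ → ℂ be entire (complex-analytic) functions of (u₁, u₃; λ₄, λ₆, λ₈, λ₁₀), each satisfying the system of heat equations ℓᵢ ψ = Hᵢ ψ for i = 0, 2, 4, 6, together with the initial condition ψ(u₁, u₃; 0, 0, 0, 0) = u₃ − (1/3)u₁³. Then ψ₁ = ψ₂. (The entire function satisfying this system and initial condition is the genus-2 hyperelliptic sigma function σ(u; λ), which is hence uniquely determined by them.) -/

import Mathlib

noncomputable section

/-- Functions of (u₁, u₃, λ₄, λ₆, λ₈, λ₁₀), curried. -/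
abbrev F6 : Type := ℂ → ℂ → ℂ → ℂ → ℂ → ℂ → ℂ

/-- Partial derivative in u₁. -/
def Du1 (ψ : F6) : F6 := fun u1 u3 l4 l6 l8 l10 => deriv (fun t => ψ t u3 l4 l6 l8 l10) u1

/-- Partial derivative in u₃. -/
def Du3 (ψ : F6) : F6 := fun u1 u3 l4 l6 l8 l10 => deriv (fun t => ψ u1 t l4 l6 l8 l10) u3

/-- Partial derivative in λ₄. -/
def Dl4 (ψ : F6) : F6 := fun u1 u3 l4 l6 l8 l10 => deriv (fun t => ψ u1 u3 t l6 l8 l10) l4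

/-- Partial derivative in λ₆. -/
def Dl6 (ψ : F6) : F6 := fun u1 u3 l4 l6 l8 l10 => deriv (fun t => ψ u1 u3 l4 t l8 l10) l6

/-- Partial derivative in λ₈. -/
def Dl8 (ψ : F6) : F6 := fun u1 u3 l4 l6 l8 l10 => deriv (fun t => ψ u1 u3 l4 l6 t l10) l8

/-- Partial derivative in λ₁₀. -/
def Dl10 (ψ : F6) : F6 := fun u1 u3 l4 l6 l8 l10 => deriv (fun t => ψ u1 u3 l4 l6 l8 t) l10

/-- ψ is an entire (complex-analytic) function of all six variables. -/
def IsEntire6 (ψ : F6) : Prop :=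
  AnalyticOnNhd ℂ
    (fun p : ℂ × ℂ × ℂ × ℂ × ℂ × ℂ =>
      ψ p.1 p.2.1 p.2.2.1 p.2.2.2.1 p.2.2.2.2.1 p.2.2.2.2.2)
    Set.univ

/-- The system of heat equations ℓᵢψ = Hᵢψ, i = 0, 2, 4, 6, together with the initial
condition ψ(u₁, u₃; 0, 0, 0, 0) = u₃ − (1/3)u₁³. -/
def SigmaHeatSolution (ψ : F6) : Prop :=
  -- ℓ₀ψ = H₀ψ
  (∀ u1 u3 l4 l6 l8 l10 : ℂ,
    4 * l4 * Dl4 ψ u1 u3 l4 l6 l8 l10 + 6 * l6 * Dl6 ψ u1 u3 l4 l6 l8 l10 +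
      8 * l8 * Dl8 ψ u1 u3 l4 l6 l8 l10 + 10 * l10 * Dl10 ψ u1 u3 l4 l6 l8 l10 =
    u1 * Du1 ψ u1 u3 l4 l6 l8 l10 + 3 * u3 * Du3 ψ u1 u3 l4 l6 l8 l10 -
      3 * ψ u1 u3 l4 l6 l8 l10) ∧
  -- ℓ₂ψ = H₂ψ
  (∀ u1 u3 l4 l6 l8 l10 : ℂ,
    6 * l6 * Dl4 ψ u1 u3 l4 l6 l8 l10 +
      (8 * l8 - (12 / 5) * l4 ^ 2) * Dl6 ψ u1 u3 l4 l6 l8 l10 +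
      (10 * l10 - (8 / 5) * l4 * l6) * Dl8 ψ u1 u3 l4 l6 l8 l10 -
      (4 / 5) * l4 * l8 * Dl10 ψ u1 u3 l4 l6 l8 l10 =
    (1 / 2) * Du1 (Du1 ψ) u1 u3 l4 l6 l8 l10 -
      (4 / 5) * l4 * u3 * Du1 ψ u1 u3 l4 l6 l8 l10 +
      u1 * Du3 ψ u1 u3 l4 l6 l8 l10 +
      (-(3 / 10) * l4 * u1 ^ 2 + (1 / 10) * (15 * l8 - 4 * l4 ^ 2) * u3 ^ 2) *
        ψ u1 u3 l4 l6 l8 l10) ∧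
  -- ℓ₄ψ = H₄ψ
  (∀ u1 u3 l4 l6 l8 l10 : ℂ,
    8 * l8 * Dl4 ψ u1 u3 l4 l6 l8 l10 +
      (10 * l10 - (8 / 5) * l4 * l6) * Dl6 ψ u1 u3 l4 l6 l8 l10 +
      (4 * l4 * l8 - (12 / 5) * l6 ^ 2) * Dl8 ψ u1 u3 l4 l6 l8 l10 +
      (6 * l4 * l10 - (6 / 5) * l6 * l8) * Dl10 ψ u1 u3 l4 l6 l8 l10 =
    Du1 (Du3 ψ) u1 u3 l4 l6 l8 l10 -
      (6 / 5) * l6 * u3 * Du1 ψ u1 u3 l4 l6 l8 l10 +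
      l4 * u3 * Du3 ψ u1 u3 l4 l6 l8 l10 +
      (-(1 / 5) * l6 * u1 ^ 2 + l8 * u1 * u3 +
        (1 / 10) * (30 * l10 - 6 * l6 * l4) * u3 ^ 2 - l4) * ψ u1 u3 l4 l6 l8 l10) ∧
  -- ℓ₆ψ = H₆ψ
  (∀ u1 u3 l4 l6 l8 l10 : ℂ,
    10 * l10 * Dl4 ψ u1 u3 l4 l6 l8 l10 -
      (4 / 5) * l4 * l8 * Dl6 ψ u1 u3 l4 l6 l8 l10 +
      (6 * l4 * l10 - (6 / 5) * l6 * l8) * Dl8 ψ u1 u3 l4 l6 l8 l10 +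
      (4 * l6 * l10 - (8 / 5) * l8 ^ 2) * Dl10 ψ u1 u3 l4 l6 l8 l10 =
    (1 / 2) * Du3 (Du3 ψ) u1 u3 l4 l6 l8 l10 -
      (3 / 5) * l8 * u3 * Du1 ψ u1 u3 l4 l6 l8 l10 +
      (-(1 / 10) * l8 * u1 ^ 2 + 2 * l10 * u1 * u3 - (3 / 10) * l8 * l4 * u3 ^ 2 -
        (1 / 2) * l6) * ψ u1 u3 l4 l6 l8 l10) ∧
  -- initial condition
  (∀ u1 u3 : ℂ, ψ u1 u3 0 0 0 0 = u3 - (1 / 3) * u1 ^ 3)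

/-!
Scaling `λₖ ↦ sᵏ λₖ` turns `φ = ψ₁ - ψ₂` into an entire function of `s` whose Taylor
coefficients at `s = 0` are (up to `N!`) the weight-`N` parts of `φ` in `λ`. They vanish by
induction on `N`. The weight-`0` part is `φ(u; 0) = 0`. If `φ` vanishes to order `N` in `s`, every
term of a heat equation that carries a `λ`-coefficient vanishes to order `N + 1`, so the weight-`N`
part `c` solves `u₁∂₁c + 3u₃∂₃c = (N + 3)c`, `½∂₁²c + u₁∂₃c = 0`, `∂₁∂₃c = 0`, `∂₃²c = 0`. The last
three force `c = c₀ + b u₃ + a u₁ - b u₁³/3`, and the Euler equation kills this since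
`N + 3 ∉ {0, 1, 3}`.
-/

open Set
open scoped ContDiff

attribute [local fun_prop] analyticAt_fst analyticAt_snd

section OneVariable

variable {𝕜 : Type*} [NontriviallyNormedField 𝕜]

theorem le_analyticOrderAt_sum_mul {ι : Type*} (t : Finset ι) {a g : ι → 𝕜 → 𝕜} {z₀ : 𝕜}
    {N : ℕ} (ha : ∀ i ∈ t, AnalyticAt 𝕜 (a i) z₀) (ha₀ : ∀ i ∈ t, a i z₀ = 0)
    (hg : ∀ i ∈ t, AnalyticAt 𝕜 (g i) z₀) (hgN : ∀ i ∈ t, N ≤ analyticOrderAt (g i) z₀) :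
    (N + 1 : ℕ) ≤ analyticOrderAt (fun s => ∑ i ∈ t, a i s * g i s) z₀ := by
  classical
  induction t using Finset.induction_on with
  | empty => simp [analyticOrderAt_eq_top.2 (Filter.Eventually.of_forall fun _ => rfl)]
  | insert i t hi ih =>
    simp only [Finset.mem_insert, forall_eq_or_imp] at ha ha₀ hg hgN
    simp only [Finset.sum_insert hi]
    refine le_trans (le_min ?_ (ih ha.2 ha₀.2 hg.2 hgN.2)) le_analyticOrderAt_add
    have h1 : 1 ≤ analyticOrderAt (a i) z₀ :=
      Order.one_le_iff_ne_zero.2 (analyticOrderAt_ne_zero.2 ⟨ha.1, ha₀.1⟩)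
    rw [show (fun s => a i s * g i s) = a i * g i from rfl, analyticOrderAt_mul ha.1 hg.1]
    push_cast
    exact (add_comm _ _).le.trans (add_le_add h1 hgN.1)

theorem iteratedDeriv_mul_deriv_zero [CharZero 𝕜] {g : 𝕜 → 𝕜} (hg : ContDiff 𝕜 ∞ g) (n : ℕ) :
    iteratedDeriv n (fun s => s * deriv g s) 0 = n * iteratedDeriv n g 0 := by
  have hg' : ContDiff 𝕜 ∞ (deriv g) := hg.iterate_deriv 1
  rw [iteratedDeriv_fun_mul (by fun_prop) (hg'.contDiffAt.of_le (by exact_mod_cast le_top))]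
  rcases n with _ | n
  · simp
  · rw [Finset.sum_eq_single 1 (fun i _ hi => by simp [iteratedDeriv_fun_id_zero, hi])
      (by simp)]
    simp [iteratedDeriv_succ']

end OneVariable

section DirectionalDerivative

variable {E V : Type*} [NormedAddCommGroup E] [NormedSpace ℂ E] [NormedAddCommGroup V]
  [NormedSpace ℂ V] {f : E → V}

def dirDeriv (v : E) (f : E → V) : E → V := fun x => fderiv ℂ f x v

theorem hasDerivAt_comp_add_smul (hf : AnalyticOnNhd ℂ f univ) (a v : E) (t : ℂ) :
    HasDerivAt (fun s : ℂ => f (a + s • v)) (dirDeriv v f (a + t • v)) t := by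
  have hline : HasDerivAt (fun s : ℂ => a + s • v) v t := by
    simpa using ((hasDerivAt_id t).smul_const v).const_add a
  exact (hf _ trivial).differentiableAt.hasFDerivAt.comp_hasDerivAt t hline

variable [CompleteSpace V]

theorem analyticOnNhd_dirDeriv (hf : AnalyticOnNhd ℂ f univ) (v : E) :
    AnalyticOnNhd ℂ (dirDeriv v f) univ :=
  (ContinuousLinearMap.apply ℂ V v).comp_analyticOnNhd hf.fderiv

theorem analyticOnNhd_iterate_dirDeriv (hf : AnalyticOnNhd ℂ f univ) (v : E) (n : ℕ) :
    AnalyticOnNhd ℂ ((dirDeriv v)^[n] f) univ := by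
  induction n with
  | zero => exact hf
  | succ n ih => rw [Function.iterate_succ_apply']; exact analyticOnNhd_dirDeriv ih v

theorem dirDeriv_comm (hf : AnalyticOnNhd ℂ f univ) (v w : E) :
    dirDeriv v (dirDeriv w f) = dirDeriv w (dirDeriv v f) := by
  have second : ∀ x a b, dirDeriv a (dirDeriv b f) x = fderiv ℂ (fderiv ℂ f) x a b :=
    fun x a b => by
      show fderiv ℂ (fun y => fderiv ℂ f y b) x a = _
      rw [fderiv_clm_apply (hf.fderiv x trivial).differentiableAt (differentiableAt_const b)]
      simp
  funext x
  rw [second, second,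
    ((hf x trivial).contDiffAt.isSymmSndFDerivAt (n := ⊤) (by simp)).eq]

theorem iterate_dirDeriv_comm (hf : AnalyticOnNhd ℂ f univ) (v w : E) (n : ℕ) :
    (dirDeriv v)^[n] (dirDeriv w f) = dirDeriv w ((dirDeriv v)^[n] f) := by
  induction n generalizing f with
  | zero => rfl
  | succ n ih =>
    rw [Function.iterate_succ_apply, Function.iterate_succ_apply, dirDeriv_comm hf,
      ih (analyticOnNhd_dirDeriv hf v)]

theorem iteratedDeriv_comp_add_smul (hf : AnalyticOnNhd ℂ f univ) (a v : E) (n : ℕ) (t : ℂ) :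
    iteratedDeriv n (fun s : ℂ => f (a + s • v)) t = (dirDeriv v)^[n] f (a + t • v) := by
  induction n generalizing f with
  | zero => simp
  | succ n ih =>
    rw [iteratedDeriv_succ', funext fun s => (hasDerivAt_comp_add_smul hf a v s).deriv,
      ih (analyticOnNhd_dirDeriv hf v), Function.iterate_succ_apply]

end DirectionalDerivative

section TaylorCoefficientInParameter

variable {E V : Type*} [NormedAddCommGroup E] [NormedSpace ℂ E] [NormedAddCommGroup V]
  [NormedSpace ℂ V] {G : ℂ × E → V}

theorem analyticAt_slice (hG : AnalyticOnNhd ℂ G univ) (p : E) (z : ℂ) :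
    AnalyticAt ℂ (fun s => G (s, p)) z :=
  (hG (z, p) trivial).comp (f := fun s : ℂ => (s, p)) (by fun_prop)

variable [CompleteSpace V]

theorem iteratedDeriv_fst_eq (hG : AnalyticOnNhd ℂ G univ) (n : ℕ) (s₀ : ℂ) (p : E) :
    iteratedDeriv n (fun s => G (s, p)) s₀ = (dirDeriv (1, 0))^[n] G (s₀, p) := by
  simpa using iteratedDeriv_comp_add_smul hG (0, p) (1, 0) n s₀

theorem analyticOnNhd_iteratedDeriv_fst (hG : AnalyticOnNhd ℂ G univ) (n : ℕ) (s₀ : ℂ) :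
    AnalyticOnNhd ℂ (fun p => iteratedDeriv n (fun s => G (s, p)) s₀) univ := by
  simp only [iteratedDeriv_fst_eq hG]
  exact (analyticOnNhd_iterate_dirDeriv hG _ n).comp
    (analyticOnNhd_const.prod analyticOnNhd_id) (mapsTo_univ _ _)

theorem fderiv_iteratedDeriv_fst (hG : AnalyticOnNhd ℂ G univ) (n : ℕ) (s₀ : ℂ) (p v : E) :
    fderiv ℂ (fun p => iteratedDeriv n (fun s => G (s, p)) s₀) p v =
      iteratedDeriv n (fun s => fderiv ℂ G (s, p) (0, v)) s₀ := by
  have hH := analyticOnNhd_iterate_dirDeriv hG (1, 0) n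
  simp only [iteratedDeriv_fst_eq hG]
  have hchain := (hH _ trivial).differentiableAt.hasFDerivAt.comp p
    (hasFDerivAt_prodMk_right s₀ p)
  rw [Function.comp_def] at hchain
  change _ = iteratedDeriv n (fun s => dirDeriv (0, v) G (s, p)) s₀
  rw [hchain.fderiv, iteratedDeriv_fst_eq (analyticOnNhd_dirDeriv hG _), iterate_dirDeriv_comm hG]
  rfl

theorem le_analyticOrderAt_fderiv_snd (hG : AnalyticOnNhd ℂ G univ) {N : ℕ}
    (hN : ∀ p, N ≤ analyticOrderAt (fun s => G (s, p)) 0) (p v : E) :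
    N ≤ analyticOrderAt (fun s => fderiv ℂ G (s, p) (0, v)) 0 := by
  have hv : AnalyticAt ℂ (fun s => fderiv ℂ G (s, p) (0, v)) 0 :=
    analyticAt_slice (analyticOnNhd_dirDeriv hG (0, v)) p 0
  rw [natCast_le_analyticOrderAt_iff_iteratedDeriv_eq_zero hv]
  intro i hi
  have hzero : (fun p => iteratedDeriv i (fun s => G (s, p)) 0) = 0 := funext fun p =>
    (natCast_le_analyticOrderAt_iff_iteratedDeriv_eq_zero (analyticAt_slice hG p 0)).1 (hN p) i hi
  rw [← fderiv_iteratedDeriv_fst hG, hzero]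
  simp

end TaylorCoefficientInParameter

abbrev C6 : Type := ℂ × ℂ × ℂ × ℂ × ℂ × ℂ

def uncurry6 (χ : F6) : C6 → ℂ := fun p => χ p.1 p.2.1 p.2.2.1 p.2.2.2.1 p.2.2.2.2.1 p.2.2.2.2.2

@[simp]
theorem uncurry6_apply (χ : F6) (u1 u3 l4 l6 l8 l10 : ℂ) :
    uncurry6 χ (u1, u3, l4, l6, l8, l10) = χ u1 u3 l4 l6 l8 l10 := rfl

section Partials

variable {χ χ₁ χ₂ : F6}

theorem IsEntire6.analyticOnNhd (hχ : IsEntire6 χ) : AnalyticOnNhd ℂ (uncurry6 χ) univ := hχ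

theorem Du1_eq_fderiv (hχ : IsEntire6 χ) (u1 u3 l4 l6 l8 l10 : ℂ) :
    Du1 χ u1 u3 l4 l6 l8 l10 =
      fderiv ℂ (uncurry6 χ) (u1, u3, l4, l6, l8, l10) (1, 0, 0, 0, 0, 0) := by
  simpa [dirDeriv, Du1] using
    (hasDerivAt_comp_add_smul hχ.analyticOnNhd (0, u3, l4, l6, l8, l10) (1, 0, 0, 0, 0, 0) u1).deriv

theorem Du3_eq_fderiv (hχ : IsEntire6 χ) (u1 u3 l4 l6 l8 l10 : ℂ) :
    Du3 χ u1 u3 l4 l6 l8 l10 =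
      fderiv ℂ (uncurry6 χ) (u1, u3, l4, l6, l8, l10) (0, 1, 0, 0, 0, 0) := by
  simpa [dirDeriv, Du3] using
    (hasDerivAt_comp_add_smul hχ.analyticOnNhd (u1, 0, l4, l6, l8, l10) (0, 1, 0, 0, 0, 0) u3).deriv

theorem Dl4_eq_fderiv (hχ : IsEntire6 χ) (u1 u3 l4 l6 l8 l10 : ℂ) :
    Dl4 χ u1 u3 l4 l6 l8 l10 =
      fderiv ℂ (uncurry6 χ) (u1, u3, l4, l6, l8, l10) (0, 0, 1, 0, 0, 0) := by
  simpa [dirDeriv, Dl4] using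
    (hasDerivAt_comp_add_smul hχ.analyticOnNhd (u1, u3, 0, l6, l8, l10) (0, 0, 1, 0, 0, 0) l4).deriv

theorem Dl6_eq_fderiv (hχ : IsEntire6 χ) (u1 u3 l4 l6 l8 l10 : ℂ) :
    Dl6 χ u1 u3 l4 l6 l8 l10 =
      fderiv ℂ (uncurry6 χ) (u1, u3, l4, l6, l8, l10) (0, 0, 0, 1, 0, 0) := by
  simpa [dirDeriv, Dl6] using
    (hasDerivAt_comp_add_smul hχ.analyticOnNhd (u1, u3, l4, 0, l8, l10) (0, 0, 0, 1, 0, 0) l6).deriv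

theorem Dl8_eq_fderiv (hχ : IsEntire6 χ) (u1 u3 l4 l6 l8 l10 : ℂ) :
    Dl8 χ u1 u3 l4 l6 l8 l10 =
      fderiv ℂ (uncurry6 χ) (u1, u3, l4, l6, l8, l10) (0, 0, 0, 0, 1, 0) := by
  simpa [dirDeriv, Dl8] using
    (hasDerivAt_comp_add_smul hχ.analyticOnNhd (u1, u3, l4, l6, 0, l10) (0, 0, 0, 0, 1, 0) l8).deriv

theorem Dl10_eq_fderiv (hχ : IsEntire6 χ) (u1 u3 l4 l6 l8 l10 : ℂ) :
    Dl10 χ u1 u3 l4 l6 l8 l10 =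
      fderiv ℂ (uncurry6 χ) (u1, u3, l4, l6, l8, l10) (0, 0, 0, 0, 0, 1) := by
  simpa [dirDeriv, Dl10] using
    (hasDerivAt_comp_add_smul hχ.analyticOnNhd (u1, u3, l4, l6, l8, 0) (0, 0, 0, 0, 0, 1) l10).deriv

theorem hasDerivAt_Du1 (hχ : IsEntire6 χ) (u1 u3 l4 l6 l8 l10 : ℂ) :
    HasDerivAt (fun t => χ t u3 l4 l6 l8 l10) (Du1 χ u1 u3 l4 l6 l8 l10) u1 := by
  simpa [dirDeriv, Du1_eq_fderiv hχ] using
    hasDerivAt_comp_add_smul hχ.analyticOnNhd (0, u3, l4, l6, l8, l10) (1, 0, 0, 0, 0, 0) u1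

theorem hasDerivAt_Du3 (hχ : IsEntire6 χ) (u1 u3 l4 l6 l8 l10 : ℂ) :
    HasDerivAt (fun t => χ u1 t l4 l6 l8 l10) (Du3 χ u1 u3 l4 l6 l8 l10) u3 := by
  simpa [dirDeriv, Du3_eq_fderiv hχ] using
    hasDerivAt_comp_add_smul hχ.analyticOnNhd (u1, 0, l4, l6, l8, l10) (0, 1, 0, 0, 0, 0) u3

theorem isEntire6_Du1 (hχ : IsEntire6 χ) : IsEntire6 (Du1 χ) := by
  show AnalyticOnNhd ℂ (uncurry6 (Du1 χ)) univ
  have : uncurry6 (Du1 χ) = dirDeriv (1, 0, 0, 0, 0, 0) (uncurry6 χ) :=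
    funext fun p => Du1_eq_fderiv hχ _ _ _ _ _ _
  exact this ▸ analyticOnNhd_dirDeriv hχ.analyticOnNhd _

theorem isEntire6_Du3 (hχ : IsEntire6 χ) : IsEntire6 (Du3 χ) := by
  show AnalyticOnNhd ℂ (uncurry6 (Du3 χ)) univ
  have : uncurry6 (Du3 χ) = dirDeriv (0, 1, 0, 0, 0, 0) (uncurry6 χ) :=
    funext fun p => Du3_eq_fderiv hχ _ _ _ _ _ _
  exact this ▸ analyticOnNhd_dirDeriv hχ.analyticOnNhd _

theorem IsEntire6.sub (h₁ : IsEntire6 χ₁) (h₂ : IsEntire6 χ₂) : IsEntire6 (χ₁ - χ₂) :=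
  AnalyticOnNhd.sub h₁ h₂

theorem fderiv_uncurry6_sub (h₁ : IsEntire6 χ₁) (h₂ : IsEntire6 χ₂) (p v : C6) :
    fderiv ℂ (uncurry6 (χ₁ - χ₂)) p v =
      fderiv ℂ (uncurry6 χ₁) p v - fderiv ℂ (uncurry6 χ₂) p v := by
  rw [show uncurry6 (χ₁ - χ₂) = fun p => uncurry6 χ₁ p - uncurry6 χ₂ p from rfl,
    fderiv_fun_sub (h₁.analyticOnNhd p trivial).differentiableAt
      (h₂.analyticOnNhd p trivial).differentiableAt]
  rfl

theorem Du1_sub (h₁ : IsEntire6 χ₁) (h₂ : IsEntire6 χ₂) : Du1 (χ₁ - χ₂) = Du1 χ₁ - Du1 χ₂ := by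
  funext u1 u3 l4 l6 l8 l10
  simp only [Pi.sub_apply, Du1_eq_fderiv h₁, Du1_eq_fderiv h₂, Du1_eq_fderiv (h₁.sub h₂),
    fderiv_uncurry6_sub h₁ h₂]

theorem Du3_sub (h₁ : IsEntire6 χ₁) (h₂ : IsEntire6 χ₂) : Du3 (χ₁ - χ₂) = Du3 χ₁ - Du3 χ₂ := by
  funext u1 u3 l4 l6 l8 l10
  simp only [Pi.sub_apply, Du3_eq_fderiv h₁, Du3_eq_fderiv h₂, Du3_eq_fderiv (h₁.sub h₂),
    fderiv_uncurry6_sub h₁ h₂]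

theorem Dl4_sub (h₁ : IsEntire6 χ₁) (h₂ : IsEntire6 χ₂) : Dl4 (χ₁ - χ₂) = Dl4 χ₁ - Dl4 χ₂ := by
  funext u1 u3 l4 l6 l8 l10
  simp only [Pi.sub_apply, Dl4_eq_fderiv h₁, Dl4_eq_fderiv h₂, Dl4_eq_fderiv (h₁.sub h₂),
    fderiv_uncurry6_sub h₁ h₂]

theorem Dl6_sub (h₁ : IsEntire6 χ₁) (h₂ : IsEntire6 χ₂) : Dl6 (χ₁ - χ₂) = Dl6 χ₁ - Dl6 χ₂ := by
  funext u1 u3 l4 l6 l8 l10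
  simp only [Pi.sub_apply, Dl6_eq_fderiv h₁, Dl6_eq_fderiv h₂, Dl6_eq_fderiv (h₁.sub h₂),
    fderiv_uncurry6_sub h₁ h₂]

theorem Dl8_sub (h₁ : IsEntire6 χ₁) (h₂ : IsEntire6 χ₂) : Dl8 (χ₁ - χ₂) = Dl8 χ₁ - Dl8 χ₂ := by
  funext u1 u3 l4 l6 l8 l10
  simp only [Pi.sub_apply, Dl8_eq_fderiv h₁, Dl8_eq_fderiv h₂, Dl8_eq_fderiv (h₁.sub h₂),
    fderiv_uncurry6_sub h₁ h₂]

theorem Dl10_sub (h₁ : IsEntire6 χ₁) (h₂ : IsEntire6 χ₂) : Dl10 (χ₁ - χ₂) = Dl10 χ₁ - Dl10 χ₂ := by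
  funext u1 u3 l4 l6 l8 l10
  simp only [Pi.sub_apply, Dl10_eq_fderiv h₁, Dl10_eq_fderiv h₂, Dl10_eq_fderiv (h₁.sub h₂),
    fderiv_uncurry6_sub h₁ h₂]

end Partials

section WeightScaling

variable {χ : F6}

def weightScale (s : ℂ) (p : C6) : C6 :=
  (p.1, p.2.1, s ^ 4 * p.2.2.1, s ^ 6 * p.2.2.2.1, s ^ 8 * p.2.2.2.2.1, s ^ 10 * p.2.2.2.2.2)

def scaledFamily (χ : F6) (q : ℂ × C6) : ℂ := uncurry6 χ (weightScale q.1 q.2)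

theorem analyticOnNhd_scaledFamily (hχ : IsEntire6 χ) :
    AnalyticOnNhd ℂ (scaledFamily χ) univ :=
  hχ.analyticOnNhd.comp (fun _ _ => by unfold weightScale; fun_prop) (mapsTo_univ _ _)

theorem weightScale_add_smul (s t : ℂ) (p v : C6) :
    weightScale s (p + t • v) = weightScale s p + t • weightScale s v := by
  simp only [weightScale, Prod.fst_add, Prod.snd_add, Prod.smul_fst, Prod.smul_snd, smul_eq_mul]
  ext <;> simp only [Prod.mk_add_mk, Prod.smul_mk, smul_eq_mul] <;> ring

theorem fderiv_scaledFamily (hχ : IsEntire6 χ) (s : ℂ) (p v : C6) :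
    fderiv ℂ (scaledFamily χ) (s, p) (0, v) =
      fderiv ℂ (uncurry6 χ) (weightScale s p) (weightScale s v) := by
  have h₁ := hasDerivAt_comp_add_smul (analyticOnNhd_scaledFamily hχ) (s, p) (0, v) 0
  have h₂ := hasDerivAt_comp_add_smul hχ.analyticOnNhd (weightScale s p) (weightScale s v) 0
  simp only [zero_smul, add_zero, dirDeriv] at h₁ h₂
  rw [← h₁.deriv, ← h₂.deriv]
  congr 1
  funext t
  simp [scaledFamily, weightScale_add_smul]

theorem fderiv_scaledFamily_u1 (hχ : IsEntire6 χ) (s u1 u3 l4 l6 l8 l10 : ℂ) :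
    fderiv ℂ (scaledFamily χ) (s, (u1, u3, l4, l6, l8, l10)) (0, (1, 0, 0, 0, 0, 0)) =
      Du1 χ u1 u3 (s ^ 4 * l4) (s ^ 6 * l6) (s ^ 8 * l8) (s ^ 10 * l10) := by
  simp [fderiv_scaledFamily hχ, weightScale, Du1_eq_fderiv hχ]

theorem fderiv_scaledFamily_u3 (hχ : IsEntire6 χ) (s u1 u3 l4 l6 l8 l10 : ℂ) :
    fderiv ℂ (scaledFamily χ) (s, (u1, u3, l4, l6, l8, l10)) (0, (0, 1, 0, 0, 0, 0)) =
      Du3 χ u1 u3 (s ^ 4 * l4) (s ^ 6 * l6) (s ^ 8 * l8) (s ^ 10 * l10) := by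
  simp [fderiv_scaledFamily hχ, weightScale, Du3_eq_fderiv hχ]

theorem fderiv_scaledFamily_l4 (hχ : IsEntire6 χ) (s u1 u3 l4 l6 l8 l10 : ℂ) :
    fderiv ℂ (scaledFamily χ) (s, (u1, u3, l4, l6, l8, l10)) (0, (0, 0, 1, 0, 0, 0)) =
      s ^ 4 * Dl4 χ u1 u3 (s ^ 4 * l4) (s ^ 6 * l6) (s ^ 8 * l8) (s ^ 10 * l10) := by
  rw [fderiv_scaledFamily hχ, Dl4_eq_fderiv hχ, ← smul_eq_mul, ← map_smul]
  congr 1; simp [weightScale]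

theorem fderiv_scaledFamily_l6 (hχ : IsEntire6 χ) (s u1 u3 l4 l6 l8 l10 : ℂ) :
    fderiv ℂ (scaledFamily χ) (s, (u1, u3, l4, l6, l8, l10)) (0, (0, 0, 0, 1, 0, 0)) =
      s ^ 6 * Dl6 χ u1 u3 (s ^ 4 * l4) (s ^ 6 * l6) (s ^ 8 * l8) (s ^ 10 * l10) := by
  rw [fderiv_scaledFamily hχ, Dl6_eq_fderiv hχ, ← smul_eq_mul, ← map_smul]
  congr 1; simp [weightScale]

theorem fderiv_scaledFamily_l8 (hχ : IsEntire6 χ) (s u1 u3 l4 l6 l8 l10 : ℂ) :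
    fderiv ℂ (scaledFamily χ) (s, (u1, u3, l4, l6, l8, l10)) (0, (0, 0, 0, 0, 1, 0)) =
      s ^ 8 * Dl8 χ u1 u3 (s ^ 4 * l4) (s ^ 6 * l6) (s ^ 8 * l8) (s ^ 10 * l10) := by
  rw [fderiv_scaledFamily hχ, Dl8_eq_fderiv hχ, ← smul_eq_mul, ← map_smul]
  congr 1; simp [weightScale]

theorem fderiv_scaledFamily_l10 (hχ : IsEntire6 χ) (s u1 u3 l4 l6 l8 l10 : ℂ) :
    fderiv ℂ (scaledFamily χ) (s, (u1, u3, l4, l6, l8, l10)) (0, (0, 0, 0, 0, 0, 1)) =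
      s ^ 10 * Dl10 χ u1 u3 (s ^ 4 * l4) (s ^ 6 * l6) (s ^ 8 * l8) (s ^ 10 * l10) := by
  rw [fderiv_scaledFamily hχ, Dl10_eq_fderiv hχ, ← smul_eq_mul, ← map_smul]
  congr 1; simp [weightScale]

end WeightScaling

def VanishesToWeight (N : ℕ) (χ : F6) : Prop :=
  ∀ p : C6, (N : ℕ∞) ≤ analyticOrderAt (fun s => scaledFamily χ (s, p)) 0

def weightCoeff (N : ℕ) (χ : F6) : F6 := fun u1 u3 l4 l6 l8 l10 =>
  iteratedDeriv N (fun s => scaledFamily χ (s, (u1, u3, l4, l6, l8, l10))) 0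

section WeightCoeff

variable {χ : F6} {N : ℕ}

theorem analyticAt_scaledFamily (hχ : IsEntire6 χ) (p : C6) (z : ℂ) :
    AnalyticAt ℂ (fun s => scaledFamily χ (s, p)) z :=
  analyticAt_slice (analyticOnNhd_scaledFamily hχ) p z

theorem isEntire6_weightCoeff (hχ : IsEntire6 χ) (N : ℕ) : IsEntire6 (weightCoeff N χ) :=
  analyticOnNhd_iteratedDeriv_fst (analyticOnNhd_scaledFamily hχ) N 0

theorem Du1_weightCoeff (hχ : IsEntire6 χ) (N : ℕ) :
    Du1 (weightCoeff N χ) = weightCoeff N (Du1 χ) := by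
  funext u1 u3 l4 l6 l8 l10
  rw [Du1_eq_fderiv (isEntire6_weightCoeff hχ N)]
  exact (fderiv_iteratedDeriv_fst (analyticOnNhd_scaledFamily hχ) N 0 _ _).trans
    (by simp only [fderiv_scaledFamily_u1 hχ]; rfl)

theorem Du3_weightCoeff (hχ : IsEntire6 χ) (N : ℕ) :
    Du3 (weightCoeff N χ) = weightCoeff N (Du3 χ) := by
  funext u1 u3 l4 l6 l8 l10
  rw [Du3_eq_fderiv (isEntire6_weightCoeff hχ N)]
  exact (fderiv_iteratedDeriv_fst (analyticOnNhd_scaledFamily hχ) N 0 _ _).trans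
    (by simp only [fderiv_scaledFamily_u3 hχ]; rfl)

theorem VanishesToWeight.le_analyticOrderAt_fderiv (hχ : IsEntire6 χ)
    (hN : VanishesToWeight N χ) (p v : C6) :
    N ≤ analyticOrderAt (fun s => fderiv ℂ (scaledFamily χ) (s, p) (0, v)) 0 :=
  le_analyticOrderAt_fderiv_snd (analyticOnNhd_scaledFamily hχ) hN p v

theorem VanishesToWeight.succ (hχ : IsEntire6 χ) (hN : VanishesToWeight N χ)
    (hcoeff : weightCoeff N χ = 0) : VanishesToWeight (N + 1) χ := fun p => by
  rw [natCast_le_analyticOrderAt_iff_iteratedDeriv_eq_zero (analyticAt_scaledFamily hχ p 0)]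
  intro i hi
  rcases Nat.lt_succ_iff_lt_or_eq.1 hi with hi | rfl
  · exact (natCast_le_analyticOrderAt_iff_iteratedDeriv_eq_zero
      (analyticAt_scaledFamily hχ p 0)).1 (hN p) i hi
  · change uncurry6 (weightCoeff i χ) p = 0
    rw [hcoeff]
    rfl

end WeightCoeff

/-- Every `λ`-dependent term of a heat equation at `(u, s·λ)` is a polynomial in `s` vanishing at
`s = 0` times one of these functions; `sᵏ Dlₖ χ` is the `λₖ`-derivative of `scaledFamily χ`, so
they all vanish to the same order as the slice of `χ` itself. -/
def remainderBasis (χ : F6) (u1 u3 l4 l6 l8 l10 : ℂ) : Fin 7 → ℂ → ℂ :=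
  ![fun s => χ u1 u3 (s ^ 4 * l4) (s ^ 6 * l6) (s ^ 8 * l8) (s ^ 10 * l10),
    fun s => Du1 χ u1 u3 (s ^ 4 * l4) (s ^ 6 * l6) (s ^ 8 * l8) (s ^ 10 * l10),
    fun s => Du3 χ u1 u3 (s ^ 4 * l4) (s ^ 6 * l6) (s ^ 8 * l8) (s ^ 10 * l10),
    fun s => s ^ 4 * Dl4 χ u1 u3 (s ^ 4 * l4) (s ^ 6 * l6) (s ^ 8 * l8) (s ^ 10 * l10),
    fun s => s ^ 6 * Dl6 χ u1 u3 (s ^ 4 * l4) (s ^ 6 * l6) (s ^ 8 * l8) (s ^ 10 * l10),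
    fun s => s ^ 8 * Dl8 χ u1 u3 (s ^ 4 * l4) (s ^ 6 * l6) (s ^ 8 * l8) (s ^ 10 * l10),
    fun s => s ^ 10 * Dl10 χ u1 u3 (s ^ 4 * l4) (s ^ 6 * l6) (s ^ 8 * l8) (s ^ 10 * l10)]

section Remainder

variable {χ : F6} {N : ℕ}

theorem VanishesToWeight.analyticOrderAt_remainderBasis (hχ : IsEntire6 χ)
    (hN : VanishesToWeight N χ) (u1 u3 l4 l6 l8 l10 : ℂ) (i : Fin 7) :
    AnalyticAt ℂ (remainderBasis χ u1 u3 l4 l6 l8 l10 i) 0 ∧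
      N ≤ analyticOrderAt (remainderBasis χ u1 u3 l4 l6 l8 l10 i) 0 := by
  set p : C6 := (u1, u3, l4, l6, l8, l10)
  have hderiv : ∀ v : C6, AnalyticAt ℂ (fun s => fderiv ℂ (scaledFamily χ) (s, p) (0, v)) 0 ∧
      N ≤ analyticOrderAt (fun s => fderiv ℂ (scaledFamily χ) (s, p) (0, v)) 0 :=
    fun v => ⟨analyticAt_slice (analyticOnNhd_dirDeriv (analyticOnNhd_scaledFamily hχ) _) p 0,
      hN.le_analyticOrderAt_fderiv hχ p v⟩
  fin_cases i
  · exact ⟨analyticAt_scaledFamily hχ p 0, hN p⟩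
  · simpa [remainderBasis, fderiv_scaledFamily_u1 hχ] using hderiv (1, 0, 0, 0, 0, 0)
  · simpa [remainderBasis, fderiv_scaledFamily_u3 hχ] using hderiv (0, 1, 0, 0, 0, 0)
  · simpa [remainderBasis, fderiv_scaledFamily_l4 hχ] using hderiv (0, 0, 1, 0, 0, 0)
  · simpa [remainderBasis, fderiv_scaledFamily_l6 hχ] using hderiv (0, 0, 0, 1, 0, 0)
  · simpa [remainderBasis, fderiv_scaledFamily_l8 hχ] using hderiv (0, 0, 0, 0, 1, 0)
  · simpa [remainderBasis, fderiv_scaledFamily_l10 hχ] using hderiv (0, 0, 0, 0, 0, 1)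

theorem VanishesToWeight.iteratedDeriv_eq_zero (hχ : IsEntire6 χ) (hN : VanishesToWeight N χ)
    (u1 u3 l4 l6 l8 l10 : ℂ) {f : ℂ → ℂ} (a : Fin 7 → ℂ → ℂ) (ha : ∀ i, AnalyticAt ℂ (a i) 0)
    (ha₀ : ∀ i, a i 0 = 0)
    (hf : ∀ s, f s = ∑ i, a i s * remainderBasis χ u1 u3 l4 l6 l8 l10 i s) :
    iteratedDeriv N f 0 = 0 := by
  have horder : ((N + 1 : ℕ) : ℕ∞) ≤ analyticOrderAt f 0 := by
    rw [funext hf]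
    exact le_analyticOrderAt_sum_mul Finset.univ (fun i _ => ha i) (fun i _ => ha₀ i)
      (fun i _ => (hN.analyticOrderAt_remainderBasis hχ _ _ _ _ _ _ i).1)
      (fun i _ => (hN.analyticOrderAt_remainderBasis hχ _ _ _ _ _ _ i).2)
  have hf : AnalyticAt ℂ f 0 :=
    (analyticOrderAt_ne_zero.1 (ne_bot_of_le_ne_bot (by simp) horder)).1
  exact (natCast_le_analyticOrderAt_iff_iteratedDeriv_eq_zero hf).1 horder N N.lt_succ_self

end Remainder

section Euler
variable {χ : F6}

theorem hasDerivAt_scaledFamily (hχ : IsEntire6 χ) (u1 u3 l4 l6 l8 l10 s : ℂ) :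
    HasDerivAt (fun s => scaledFamily χ (s, (u1, u3, l4, l6, l8, l10)))
      (4 * s ^ 3 * l4 * Dl4 χ u1 u3 (s ^ 4 * l4) (s ^ 6 * l6) (s ^ 8 * l8) (s ^ 10 * l10) +
        6 * s ^ 5 * l6 * Dl6 χ u1 u3 (s ^ 4 * l4) (s ^ 6 * l6) (s ^ 8 * l8) (s ^ 10 * l10) +
        8 * s ^ 7 * l8 * Dl8 χ u1 u3 (s ^ 4 * l4) (s ^ 6 * l6) (s ^ 8 * l8) (s ^ 10 * l10) +
        10 * s ^ 9 * l10 * Dl10 χ u1 u3 (s ^ 4 * l4) (s ^ 6 * l6) (s ^ 8 * l8) (s ^ 10 * l10))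
      s := by
  have hpow : ∀ (k : ℕ) (l : ℂ), HasDerivAt (fun s : ℂ => s ^ k * l) (k * s ^ (k - 1) * l) s :=
    fun k l => (hasDerivAt_pow k s).mul_const l
  have hcurve : HasDerivAt (fun s : ℂ => ((u1, u3, s ^ 4 * l4, s ^ 6 * l6, s ^ 8 * l8,
      s ^ 10 * l10) : C6))
      ((4 * s ^ 3 * l4) • (0, 0, 1, 0, 0, 0) + (6 * s ^ 5 * l6) • (0, 0, 0, 1, 0, 0) +
        (8 * s ^ 7 * l8) • (0, 0, 0, 0, 1, 0) + (10 * s ^ 9 * l10) • (0, 0, 0, 0, 0, 1)) s := by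
    convert (hasDerivAt_const s u1).prodMk ((hasDerivAt_const s u3).prodMk
      ((hpow 4 l4).prodMk ((hpow 6 l6).prodMk ((hpow 8 l8).prodMk (hpow 10 l10))))) using 1
    simp
  refine ((hχ.analyticOnNhd _ trivial).differentiableAt.hasFDerivAt.comp_hasDerivAt s
    hcurve).congr_deriv ?_
  simp only [map_add, map_smul, smul_eq_mul, Dl4_eq_fderiv hχ, Dl6_eq_fderiv hχ,
    Dl8_eq_fderiv hχ, Dl10_eq_fderiv hχ]

end Euler

section TruncatedSystem

variable {ψ₁ ψ₂ : F6} {N : ℕ}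

theorem weightCoeff_sub_principal₂ (h₁e : IsEntire6 ψ₁) (h₂e : IsEntire6 ψ₂)
    (h₁ : SigmaHeatSolution ψ₁) (h₂ : SigmaHeatSolution ψ₂)
    (hN : VanishesToWeight N (ψ₁ - ψ₂)) (u1 u3 l4 l6 l8 l10 : ℂ) :
    1 / 2 * Du1 (Du1 (weightCoeff N (ψ₁ - ψ₂))) u1 u3 l4 l6 l8 l10 +
      u1 * Du3 (weightCoeff N (ψ₁ - ψ₂)) u1 u3 l4 l6 l8 l10 = 0 := by
  have hφ := h₁e.sub h₂e
  rw [Du1_weightCoeff hφ, Du1_weightCoeff (isEntire6_Du1 hφ), Du3_weightCoeff hφ, weightCoeff,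
    weightCoeff, ← iteratedDeriv_const_mul_field, ← iteratedDeriv_const_mul_field,
    ← iteratedDeriv_fun_add
      (contDiffAt_const.mul
        (analyticAt_scaledFamily (isEntire6_Du1 (isEntire6_Du1 hφ)) _ 0).contDiffAt)
      (contDiffAt_const.mul (analyticAt_scaledFamily (isEntire6_Du3 hφ) _ 0).contDiffAt)]
  refine hN.iteratedDeriv_eq_zero hφ u1 u3 l4 l6 l8 l10
    ![fun s => 3 / 10 * s ^ 4 * l4 * u1 ^ 2 - 1 / 10 * (15 * l8 - 4 * l4 ^ 2) * s ^ 8 * u3 ^ 2,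
      fun s => 4 / 5 * s ^ 4 * l4 * u3,
      fun _ => 0,
      fun s => 6 * l6 * s ^ 2,
      fun s => (8 * l8 - 12 / 5 * l4 ^ 2) * s ^ 2,
      fun s => (10 * l10 - 8 / 5 * l4 * l6) * s ^ 2,
      fun s => -(4 / 5) * l4 * l8 * s ^ 2]
    (fun i => by fin_cases i <;> simp <;> fun_prop) (fun i => by fin_cases i <;> simp) fun s => ?_
  simp only [Fin.sum_univ_seven, remainderBasis, Matrix.cons_val, scaledFamily, weightScale,
    uncurry6_apply, Pi.sub_apply, Du1_sub h₁e h₂e,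
    Du1_sub (isEntire6_Du1 h₁e) (isEntire6_Du1 h₂e), Du3_sub h₁e h₂e, Dl4_sub h₁e h₂e,
    Dl6_sub h₁e h₂e, Dl8_sub h₁e h₂e, Dl10_sub h₁e h₂e]
  linear_combination h₂.2.1 u1 u3 (s ^ 4 * l4) (s ^ 6 * l6) (s ^ 8 * l8) (s ^ 10 * l10) -
    h₁.2.1 u1 u3 (s ^ 4 * l4) (s ^ 6 * l6) (s ^ 8 * l8) (s ^ 10 * l10)

theorem weightCoeff_sub_principal₄ (h₁e : IsEntire6 ψ₁) (h₂e : IsEntire6 ψ₂)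
    (h₁ : SigmaHeatSolution ψ₁) (h₂ : SigmaHeatSolution ψ₂)
    (hN : VanishesToWeight N (ψ₁ - ψ₂)) (u1 u3 l4 l6 l8 l10 : ℂ) :
    Du1 (Du3 (weightCoeff N (ψ₁ - ψ₂))) u1 u3 l4 l6 l8 l10 = 0 := by
  have hφ := h₁e.sub h₂e
  rw [Du3_weightCoeff hφ, Du1_weightCoeff (isEntire6_Du3 hφ)]
  refine hN.iteratedDeriv_eq_zero hφ u1 u3 l4 l6 l8 l10
    ![fun s => 1 / 5 * s ^ 6 * l6 * u1 ^ 2 - s ^ 8 * l8 * u1 * u3 -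
        1 / 10 * (30 * l10 - 6 * l6 * l4) * s ^ 10 * u3 ^ 2 + s ^ 4 * l4,
      fun s => 6 / 5 * s ^ 6 * l6 * u3,
      fun s => -s ^ 4 * l4 * u3,
      fun s => 8 * l8 * s ^ 4,
      fun s => (10 * l10 - 8 / 5 * l4 * l6) * s ^ 4,
      fun s => (4 * l4 * l8 - 12 / 5 * l6 ^ 2) * s ^ 4,
      fun s => (6 * l4 * l10 - 6 / 5 * l6 * l8) * s ^ 4]
    (fun i => by fin_cases i <;> simp <;> fun_prop) (fun i => by fin_cases i <;> simp) fun s => ?_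
  simp only [Fin.sum_univ_seven, remainderBasis, Matrix.cons_val, scaledFamily, weightScale,
    uncurry6_apply, Pi.sub_apply, Du1_sub h₁e h₂e,
    Du1_sub (isEntire6_Du3 h₁e) (isEntire6_Du3 h₂e), Du3_sub h₁e h₂e, Dl4_sub h₁e h₂e,
    Dl6_sub h₁e h₂e, Dl8_sub h₁e h₂e, Dl10_sub h₁e h₂e]
  linear_combination h₂.2.2.1 u1 u3 (s ^ 4 * l4) (s ^ 6 * l6) (s ^ 8 * l8) (s ^ 10 * l10) -
    h₁.2.2.1 u1 u3 (s ^ 4 * l4) (s ^ 6 * l6) (s ^ 8 * l8) (s ^ 10 * l10)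

theorem weightCoeff_sub_principal₆ (h₁e : IsEntire6 ψ₁) (h₂e : IsEntire6 ψ₂)
    (h₁ : SigmaHeatSolution ψ₁) (h₂ : SigmaHeatSolution ψ₂)
    (hN : VanishesToWeight N (ψ₁ - ψ₂)) (u1 u3 l4 l6 l8 l10 : ℂ) :
    Du3 (Du3 (weightCoeff N (ψ₁ - ψ₂))) u1 u3 l4 l6 l8 l10 = 0 := by
  have hφ := h₁e.sub h₂e
  rw [Du3_weightCoeff hφ, Du3_weightCoeff (isEntire6_Du3 hφ)]
  refine hN.iteratedDeriv_eq_zero hφ u1 u3 l4 l6 l8 l10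
    ![fun s => 1 / 5 * s ^ 8 * l8 * u1 ^ 2 - 4 * s ^ 10 * l10 * u1 * u3 +
        3 / 5 * s ^ 12 * l8 * l4 * u3 ^ 2 + s ^ 6 * l6,
      fun s => 6 / 5 * s ^ 8 * l8 * u3,
      fun _ => 0,
      fun s => 20 * l10 * s ^ 6,
      fun s => -(8 / 5) * l4 * l8 * s ^ 6,
      fun s => (12 * l4 * l10 - 12 / 5 * l6 * l8) * s ^ 6,
      fun s => (8 * l6 * l10 - 16 / 5 * l8 ^ 2) * s ^ 6]
    (fun i => by fin_cases i <;> simp <;> fun_prop) (fun i => by fin_cases i <;> simp) fun s => ?_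
  simp only [Fin.sum_univ_seven, remainderBasis, Matrix.cons_val, scaledFamily, weightScale,
    uncurry6_apply, Pi.sub_apply, Du1_sub h₁e h₂e,
    Du3_sub (isEntire6_Du3 h₁e) (isEntire6_Du3 h₂e), Du3_sub h₁e h₂e, Dl4_sub h₁e h₂e,
    Dl6_sub h₁e h₂e, Dl8_sub h₁e h₂e, Dl10_sub h₁e h₂e]
  linear_combination 2 * (h₂.2.2.2.1 u1 u3 (s ^ 4 * l4) (s ^ 6 * l6) (s ^ 8 * l8) (s ^ 10 * l10) -
    h₁.2.2.2.1 u1 u3 (s ^ 4 * l4) (s ^ 6 * l6) (s ^ 8 * l8) (s ^ 10 * l10))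

theorem weightCoeff_sub_euler (h₁e : IsEntire6 ψ₁) (h₂e : IsEntire6 ψ₂)
    (h₁ : SigmaHeatSolution ψ₁) (h₂ : SigmaHeatSolution ψ₂) (N : ℕ) (u1 u3 l4 l6 l8 l10 : ℂ) :
    u1 * Du1 (weightCoeff N (ψ₁ - ψ₂)) u1 u3 l4 l6 l8 l10 +
      3 * u3 * Du3 (weightCoeff N (ψ₁ - ψ₂)) u1 u3 l4 l6 l8 l10 =
      (N + 3) * weightCoeff N (ψ₁ - ψ₂) u1 u3 l4 l6 l8 l10 := by
  have hφ := h₁e.sub h₂e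
  set p : C6 := (u1, u3, l4, l6, l8, l10)
  have hslice : ∀ χ : F6, IsEntire6 χ → ContDiff ℂ ∞ (fun s => scaledFamily χ (s, p)) :=
    fun χ hχ => contDiff_iff_contDiffAt.2 fun z => (analyticAt_scaledFamily hχ p z).contDiffAt
  have heuler : (fun s => s * deriv (fun s => scaledFamily (ψ₁ - ψ₂) (s, p)) s) =
      fun s => u1 * scaledFamily (Du1 (ψ₁ - ψ₂)) (s, p) +
        3 * u3 * scaledFamily (Du3 (ψ₁ - ψ₂)) (s, p) - 3 * scaledFamily (ψ₁ - ψ₂) (s, p) := by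
    funext s
    rw [(hasDerivAt_scaledFamily hφ u1 u3 l4 l6 l8 l10 s).deriv]
    simp only [p, scaledFamily, weightScale, uncurry6_apply, Pi.sub_apply, Du1_sub h₁e h₂e,
      Du3_sub h₁e h₂e, Dl4_sub h₁e h₂e, Dl6_sub h₁e h₂e, Dl8_sub h₁e h₂e, Dl10_sub h₁e h₂e]
    linear_combination h₁.1 u1 u3 (s ^ 4 * l4) (s ^ 6 * l6) (s ^ 8 * l8) (s ^ 10 * l10) -
      h₂.1 u1 u3 (s ^ 4 * l4) (s ^ 6 * l6) (s ^ 8 * l8) (s ^ 10 * l10)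
  have h := iteratedDeriv_mul_deriv_zero (hslice _ hφ) N
  have hc : ∀ χ : F6, IsEntire6 χ → ∀ c : ℂ,
      ContDiffAt ℂ N (fun s => c * scaledFamily χ (s, p)) 0 :=
    fun χ hχ c => contDiffAt_const.mul (analyticAt_scaledFamily hχ p 0).contDiffAt
  rw [heuler, iteratedDeriv_fun_sub ((hc _ (isEntire6_Du1 hφ) u1).add
      (hc _ (isEntire6_Du3 hφ) (3 * u3))) (hc _ hφ 3),
    iteratedDeriv_fun_add (hc _ (isEntire6_Du1 hφ) u1) (hc _ (isEntire6_Du3 hφ) (3 * u3)),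
    iteratedDeriv_const_mul_field, iteratedDeriv_const_mul_field,
    iteratedDeriv_const_mul_field] at h
  rw [Du1_weightCoeff hφ, Du3_weightCoeff hφ]
  simp only [weightCoeff]
  linear_combination h

end TruncatedSystem

theorem exists_cubic_of_truncated_heat_system {c : F6} (hc : IsEntire6 c)
    (h2 : ∀ u1 u3 l4 l6 l8 l10 : ℂ,
      1 / 2 * Du1 (Du1 c) u1 u3 l4 l6 l8 l10 + u1 * Du3 c u1 u3 l4 l6 l8 l10 = 0)
    (h4 : ∀ u1 u3 l4 l6 l8 l10 : ℂ, Du1 (Du3 c) u1 u3 l4 l6 l8 l10 = 0)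
    (h6 : ∀ u1 u3 l4 l6 l8 l10 : ℂ, Du3 (Du3 c) u1 u3 l4 l6 l8 l10 = 0) (l4 l6 l8 l10 : ℂ) :
    ∃ (b : ℂ) (A : ℂ → ℂ), ∀ x y, Du3 c x y l4 l6 l8 l10 = b ∧
      Du1 c x y l4 l6 l8 l10 = A y - b * x ^ 2 ∧
      c x y l4 l6 l8 l10 = c 0 0 l4 l6 l8 l10 + b * y + A y * x - b * x ^ 3 / 3 := by
  have const : ∀ f : ℂ → ℂ, (∀ t, HasDerivAt f 0 t) → ∀ x, f x = f 0 := fun f hf x =>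
    is_const_of_deriv_eq_zero (fun t => (hf t).differentiableAt) (fun t => (hf t).deriv) x 0
  set b := Du3 c 0 0 l4 l6 l8 l10
  set A := fun y => Du1 c 0 y l4 l6 l8 l10
  have hB : ∀ x y, Du3 c x y l4 l6 l8 l10 = b := fun x y =>
    (const _ (fun t => (hasDerivAt_Du3 (isEntire6_Du3 hc) x t l4 l6 l8 l10).congr_deriv
      (h6 x t l4 l6 l8 l10)) y).trans
    (const _ (fun t => (hasDerivAt_Du1 (isEntire6_Du3 hc) t 0 l4 l6 l8 l10).congr_deriv
      (h4 t 0 l4 l6 l8 l10)) x)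
  have hc0 : ∀ y, c 0 y l4 l6 l8 l10 = c 0 0 l4 l6 l8 l10 + b * y := fun y => by
    have := const (fun t => c 0 t l4 l6 l8 l10 - b * t) (fun t =>
      ((hasDerivAt_Du3 hc 0 t l4 l6 l8 l10).sub ((hasDerivAt_id t).const_mul b)).congr_deriv
        (by simp only [hB, mul_one, sub_self])) y
    simp only [mul_zero, sub_zero] at this
    linear_combination this
  have hA : ∀ x y, Du1 c x y l4 l6 l8 l10 = A y - b * x ^ 2 := fun x y => by
    have := const (fun t => Du1 c t y l4 l6 l8 l10 + b * t ^ 2) (fun t =>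
      ((hasDerivAt_Du1 (isEntire6_Du1 hc) t y l4 l6 l8 l10).add
        ((hasDerivAt_pow 2 t).const_mul b)).congr_deriv
        (by linear_combination 2 * h2 t y l4 l6 l8 l10 - 2 * t * hB t y)) x
    simp only [ne_eq, OfNat.ofNat_ne_zero, not_false_eq_true, zero_pow, mul_zero,
      add_zero] at this
    linear_combination this
  have hF : ∀ x y, c x y l4 l6 l8 l10 = c 0 y l4 l6 l8 l10 + A y * x - b * x ^ 3 / 3 :=
    fun x y => by
    have := const (fun t => c t y l4 l6 l8 l10 - A y * t + b * t ^ 3 / 3) (fun t =>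
      (((hasDerivAt_Du1 hc t y l4 l6 l8 l10).sub ((hasDerivAt_id t).const_mul (A y))).add
        (((hasDerivAt_pow 3 t).const_mul b).div_const 3)).congr_deriv
        (by simp only [hA t y]; push_cast; ring)) x
    simp only [ne_eq, OfNat.ofNat_ne_zero, not_false_eq_true, zero_pow, mul_zero, sub_zero,
      zero_div, add_zero] at this
    linear_combination this
  exact ⟨b, A, fun x y => ⟨hB x y, hA x y, by rw [hF, hc0]⟩⟩

theorem eq_zero_of_truncated_heat_system {c : F6} (hc : IsEntire6 c) {m : ℂ} (hm0 : m ≠ 0)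
    (hm1 : m ≠ 1) (hm3 : m ≠ 3)
    (h0 : ∀ u1 u3 l4 l6 l8 l10 : ℂ, u1 * Du1 c u1 u3 l4 l6 l8 l10 +
      3 * u3 * Du3 c u1 u3 l4 l6 l8 l10 = m * c u1 u3 l4 l6 l8 l10)
    (h2 : ∀ u1 u3 l4 l6 l8 l10 : ℂ,
      1 / 2 * Du1 (Du1 c) u1 u3 l4 l6 l8 l10 + u1 * Du3 c u1 u3 l4 l6 l8 l10 = 0)
    (h4 : ∀ u1 u3 l4 l6 l8 l10 : ℂ, Du1 (Du3 c) u1 u3 l4 l6 l8 l10 = 0)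
    (h6 : ∀ u1 u3 l4 l6 l8 l10 : ℂ, Du3 (Du3 c) u1 u3 l4 l6 l8 l10 = 0) : c = 0 := by
  funext u1 u3 l4 l6 l8 l10
  obtain ⟨b, A, hform⟩ := exists_cubic_of_truncated_heat_system hc h2 h4 h6 l4 l6 l8 l10
  have hc00 : c 0 0 l4 l6 l8 l10 = 0 := by
    have := h0 0 0 l4 l6 l8 l10
    simp only [zero_mul, mul_zero, add_zero] at this
    exact (mul_eq_zero.1 this.symm).resolve_left hm0
  have hb : b = 0 := by
    have := h0 0 1 l4 l6 l8 l10
    rw [(hform 0 1).1, (hform 0 1).2.2, hc00] at this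
    have h : (m - 3) * b = 0 := by linear_combination -this
    exact (mul_eq_zero.1 h).resolve_left (sub_ne_zero.2 hm3)
  have hA : A u3 = 0 := by
    have := h0 1 u3 l4 l6 l8 l10
    rw [(hform 1 u3).1, (hform 1 u3).2.1, (hform 1 u3).2.2, hc00, hb] at this
    have h : (m - 1) * A u3 = 0 := by linear_combination -this
    exact (mul_eq_zero.1 h).resolve_left (sub_ne_zero.2 hm1)
  rw [(hform u1 u3).2.2, hc00, hb, hA]
  simp

theorem eq_zero_of_forall_vanishesToWeight {φ : F6} (hφ : IsEntire6 φ)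
    (h : ∀ N, VanishesToWeight N φ) : φ = 0 := by
  funext u1 u3 l4 l6 l8 l10
  have htop : analyticOrderAt (fun s => scaledFamily φ (s, (u1, u3, l4, l6, l8, l10))) 0 = ⊤ :=
    ENat.eq_top_iff_forall_ge.2 fun N => h N _
  have hslice := (AnalyticOnNhd.analyticOrderAt_eq_top_iff_eq_zero 0
    (analyticAt_scaledFamily hφ _)).1 htop
  simpa [scaledFamily, weightScale] using congrFun hslice 1

theorem vanishesToWeight_sub {ψ₁ ψ₂ : F6} (h₁e : IsEntire6 ψ₁) (h₂e : IsEntire6 ψ₂)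
    (h₁ : SigmaHeatSolution ψ₁) (h₂ : SigmaHeatSolution ψ₂) (N : ℕ) :
    VanishesToWeight N (ψ₁ - ψ₂) := by
  induction N with
  | zero => exact fun p => by simp
  | succ N ih =>
    refine ih.succ (h₁e.sub h₂e) ?_
    rcases Nat.eq_zero_or_pos N with rfl | hN
    · funext u1 u3 l4 l6 l8 l10
      simp [weightCoeff, scaledFamily, weightScale, h₁.2.2.2.2, h₂.2.2.2.2]
    · exact eq_zero_of_truncated_heat_system (isEntire6_weightCoeff (h₁e.sub h₂e) N)
        (m := N + 3) (by exact_mod_cast (show N + 3 ≠ 0 by omega))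
        (by exact_mod_cast (show N + 3 ≠ 1 by omega))
        (by exact_mod_cast (show N + 3 ≠ 3 by omega))
        (weightCoeff_sub_euler h₁e h₂e h₁ h₂ N) (weightCoeff_sub_principal₂ h₁e h₂e h₁ h₂ ih)
        (weightCoeff_sub_principal₄ h₁e h₂e h₁ h₂ ih) (weightCoeff_sub_principal₆ h₁e h₂e h₁ h₂ ih)

/-- Uniqueness of the genus-2 hyperelliptic sigma function: any two entire solutions of
the system of heat equations with the initial condition `u₃ − (1/3)u₁³` coincide. -/
theorem sigma_heat_uniqueness (ψ₁ ψ₂ : F6)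
    (h₁e : IsEntire6 ψ₁) (h₂e : IsEntire6 ψ₂)
    (h₁ : SigmaHeatSolution ψ₁) (h₂ : SigmaHeatSolution ψ₂) :
    ψ₁ = ψ₂ :=
  sub_eq_zero.1 (eq_zero_of_forall_vanishesToWeight (h₁e.sub h₂e)
    (vanishesToWeight_sub h₁e h₂e h₁ h₂))
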